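/- Let N be a near hexagon in which every line is incident with exactly three points, containing an isometrically embedded full subgeometry H that is a generalized hexagon of order 2. Then the set of points of N that do not belong to H and are collinear with at least two points of H is finite. -/

import Mathlib

/-- A partial linear space with a distinguished point set: lines are sets of points,
every line has at least two points and lies inside the point set, and two distinct
points lie on at most one common line. -/
structure Geom (P : Type*) where
  pts : Set P
  lines : Set (Set P)
  lines_pts : ∀ L ∈ lines, L ⊆ pts
  two_pts : ∀ L ∈ lines, ∃ x ∈ L, ∃ y ∈ L, x ≠ y
  unique_line : ∀ L₁ ∈ lines, ∀ L₂ ∈ lines, ∀ x y : P,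
    x ≠ y → x ∈ L₁ → y ∈ L₁ → x ∈ L₂ → y ∈ L₂ → L₁ = L₂

variable {P : Type*}

/-- The collinearity graph of a point-line geometry. -/
def Geom.graph (G : Geom P) : SimpleGraph P where
  Adj x y := x ≠ y ∧ ∃ L ∈ G.lines, x ∈ L ∧ y ∈ L
  symm := by
    constructor
    rintro x y ⟨hxy, L, hL, hx, hy⟩
    exact ⟨hxy.symm, L, hL, hy, hx⟩
  loopless := by
    constructor
    rintro x ⟨h, -⟩
    exact h rfl

/-- The distance between two points, measured in the collinearity graph. -/
noncomputable def Geom.dist (G : Geom P) (x y : P) : ℕ := G.graph.dist x y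

/-- The minimum distance from a point to a (nonempty) set of points. -/
noncomputable def Geom.setDist (G : Geom P) (x : P) (X : Set P) : ℕ :=
  sInf (G.dist x '' X)

/-- A near `2d`-gon: the collinearity graph restricted to the points is connected of
diameter `d`, and every point-line pair admits a unique nearest point on the line. -/
def Geom.IsNearPolygon (G : Geom P) (d : ℕ) : Prop :=
  (∀ x ∈ G.pts, ∀ y ∈ G.pts, G.graph.Reachable x y) ∧
  (∀ x ∈ G.pts, ∀ y ∈ G.pts, G.dist x y ≤ d) ∧
  (∃ x ∈ G.pts, ∃ y ∈ G.pts, G.dist x y = d) ∧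
  (∀ x ∈ G.pts, ∀ L ∈ G.lines, ∃! y, y ∈ L ∧ ∀ z ∈ L, G.dist x y ≤ G.dist x z)

/-- A generalized hexagon: a near hexagon in which every point is on at least two
lines and any two points at distance 2 have exactly one common neighbour. -/
def Geom.IsGenHexagon (G : Geom P) : Prop :=
  G.IsNearPolygon 3 ∧
  (∀ x ∈ G.pts, ∃ L₁ ∈ G.lines, ∃ L₂ ∈ G.lines, L₁ ≠ L₂ ∧ x ∈ L₁ ∧ x ∈ L₂) ∧
  (∀ x ∈ G.pts, ∀ y ∈ G.pts, G.dist x y = 2 →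
    ∃! z, G.graph.Adj x z ∧ G.graph.Adj z y)

/-- A geometry has order `(s,t)` if every line has exactly `s+1` points and every
point is on exactly `t+1` lines. -/
def Geom.HasOrder (G : Geom P) (s t : ℕ) : Prop :=
  (∀ L ∈ G.lines, L.ncard = s + 1) ∧
  (∀ x ∈ G.pts, {L | L ∈ G.lines ∧ x ∈ L}.ncard = t + 1)

/-- `H` is a (full) subgeometry of `G`: its points are points of `G` and its lines
are lines of `G` (lines being sets of points, fullness is automatic). -/
def Geom.IsSubgeom (H G : Geom P) : Prop := H.pts ⊆ G.pts ∧ H.lines ⊆ G.lines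

/-- `H` is isometrically embedded in `G`: distances between points of `H` agree. -/
def Geom.IsIsometric (H G : Geom P) : Prop :=
  ∀ x ∈ H.pts, ∀ y ∈ H.pts, H.dist x y = G.dist x y

/-- An ovoid: a set of points meeting every line in exactly one point. -/
def Geom.IsOvoid (G : Geom P) (O : Set P) : Prop :=
  O ⊆ G.pts ∧ ∀ L ∈ G.lines, ∃! x, x ∈ L ∩ O

/-- A valuation of a geometry: a nonnegative integer-valued function attaining the
value 0, such that every line has a unique point of minimal value and all other
points of the line have that value plus one. -/
def Geom.IsValuation (G : Geom P) (f : P → ℤ) : Prop :=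
  (∀ x ∈ G.pts, 0 ≤ f x) ∧ (∃ x ∈ G.pts, f x = 0) ∧
  (∀ L ∈ G.lines, ∃ x ∈ L, ∀ y ∈ L, y ≠ x → f y = f x + 1)

/-!
Since a generalized hexagon of order 2 is finite, and every point in question is a common
neighbour of two distinct points of `H`, it suffices that two distinct points of a near polygon
with three points per line have finitely many common neighbours. For collinear points the only
common neighbour is the third point of their line. Let `y, z` be at distance 2 with common
neighbours `a, b`; if `e` and `f` are the third points of the lines `ya` and `zb`, then `e` and
`f` are collinear, and the third point `s` of `ef` is collinear with every common neighbour of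
`y, z` other than `a, b`, and with every common neighbour of `a, b` at distance 2 from `y, z`.
Doing this for two disjoint pairs of common neighbours yields collinear points `s, s'`, and every
further common neighbour of `y, z` is then the third point of the line `ss'`: there are at most
five.
-/

theorem SimpleGraph.finite_setOf_exists_walk_length_le {V : Type*} {G : SimpleGraph V}
    (hG : ∀ v, (G.neighborSet v).Finite) (u : V) (k : ℕ) :
    {v | ∃ p : G.Walk v u, p.length ≤ k}.Finite := by
  induction k with
  | zero =>
    refine (Set.finite_singleton u).subset ?_
    rintro v ⟨p, hp⟩
    exact SimpleGraph.Walk.eq_of_length_eq_zero (Nat.le_zero.mp hp)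
  | succ k ih =>
    refine (ih.union (ih.biUnion fun w _ => hG w)).subset ?_
    rintro v ⟨p, hp⟩
    cases p with
    | nil => exact Or.inl ⟨.nil, Nat.zero_le k⟩
    | cons h q =>
      rw [SimpleGraph.Walk.length_cons] at hp
      exact Or.inr (Set.mem_biUnion ⟨q, by omega⟩ h.symm)

namespace Geom

variable {G : Geom P} {x y z u v w : P} {L : Set P} {d : ℕ}

theorem dist_comm (x y : P) : G.dist x y = G.dist y x := SimpleGraph.dist_comm

theorem dist_eq_one_iff_adj : G.dist x y = 1 ↔ G.graph.Adj x y :=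
  SimpleGraph.dist_eq_one_iff_adj

theorem mem_pts_of_adj (h : G.graph.Adj x y) : x ∈ G.pts := by
  obtain ⟨-, L, hL, hx, -⟩ := h
  exact G.lines_pts L hL hx

theorem exists_third_point (h3 : ∀ L ∈ G.lines, L.ncard = 3) (hL : L ∈ G.lines)
    (hu : u ∈ L) (hv : v ∈ L) (huv : u ≠ v) :
    ∃ w, w ≠ u ∧ w ≠ v ∧ L = {u, v, w} := by
  have hsub : ({u, v} : Set P) ⊆ L :=
    Set.insert_subset hu (Set.singleton_subset_iff.mpr hv)
  have hcard : (L \ {u, v}).ncard = 1 := by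
    rw [Set.ncard_sdiff hsub, h3 L hL, Set.ncard_pair huv]
  obtain ⟨w, hw⟩ := Set.ncard_eq_one.mp hcard
  have hwL : w ∈ L \ {u, v} := hw ▸ rfl
  simp only [Set.mem_sdiff, Set.mem_insert_iff, Set.mem_singleton_iff, not_or] at hwL
  refine ⟨w, hwL.2.1, hwL.2.2, ?_⟩
  rw [← Set.sdiff_union_of_subset hsub, hw]
  ext
  simp only [Set.mem_union, Set.mem_insert_iff, Set.mem_singleton_iff]
  tauto

theorem finite_neighborSet (hline : ∀ L ∈ G.lines, L.Finite)
    (hpt : ∀ x ∈ G.pts, {L | L ∈ G.lines ∧ x ∈ L}.Finite) (x : P) :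
    (G.graph.neighborSet x).Finite := by
  by_cases hx : x ∈ G.pts
  · refine ((hpt x hx).biUnion fun L hL => hline L hL.1).subset ?_
    rintro y ⟨-, L, hL, hxL, hyL⟩
    exact Set.mem_biUnion ⟨hL, hxL⟩ hyL
  · exact Set.finite_empty.subset fun y hy => hx (mem_pts_of_adj hy)

theorem IsNearPolygon.pts_finite (hN : G.IsNearPolygon d) (hline : ∀ L ∈ G.lines, L.Finite)
    (hpt : ∀ x ∈ G.pts, {L | L ∈ G.lines ∧ x ∈ L}.Finite) : G.pts.Finite := by
  obtain ⟨x₀, hx₀, -⟩ := hN.2.2.1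
  refine (SimpleGraph.finite_setOf_exists_walk_length_le
    (G.finite_neighborSet hline hpt) x₀ d).subset fun x hx => ?_
  obtain ⟨p, hp⟩ := (hN.1 x hx x₀ hx₀).exists_walk_length_eq_dist
  exact ⟨p, hp ▸ hN.2.1 x hx x₀ hx₀⟩

theorem HasOrder.pts_finite {s t : ℕ} (ho : G.HasOrder s t) (hN : G.IsNearPolygon d) :
    G.pts.Finite :=
  hN.pts_finite (fun L hL => Set.finite_of_ncard_ne_zero (by rw [ho.1 L hL]; omega))
    (fun x hx => Set.finite_of_ncard_ne_zero (by rw [ho.2 x hx]; omega))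

namespace IsNearPolygon

theorem dist_eq_zero_iff (hN : G.IsNearPolygon d) (hx : x ∈ G.pts) (hy : y ∈ G.pts) :
    G.dist x y = 0 ↔ x = y :=
  (hN.1 x hx y hy).dist_eq_zero_iff

theorem dist_le_add_dist (hN : G.IsNearPolygon d) (hx : x ∈ G.pts) (hy : y ∈ G.pts) (z : P) :
    G.dist x z ≤ G.dist x y + G.dist y z :=
  (hN.1 x hx y hy).dist_triangle_left z

theorem exists_nearest (hN : G.IsNearPolygon d) (hx : x ∈ G.pts) (hL : L ∈ G.lines) :
    ∃ p ∈ L, ∀ q ∈ L, q ≠ p → G.dist x q = G.dist x p + 1 := by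
  obtain ⟨p, ⟨hpL, hmin⟩, huniq⟩ := hN.2.2.2 x hx L hL
  refine ⟨p, hpL, fun q hqL hqp => ?_⟩
  have hle : G.dist x q ≤ G.dist x p + 1 := by
    calc G.dist x q ≤ G.dist x p + G.dist p q := hN.dist_le_add_dist hx (G.lines_pts L hL hpL) q
      _ = G.dist x p + 1 := by rw [dist_eq_one_iff_adj.mpr ⟨hqp.symm, L, hL, hpL, hqL⟩]
  have hne : G.dist x q ≠ G.dist x p := fun h =>
    hqp (huniq q ⟨hqL, fun r hr => h ▸ hmin r hr⟩)
  have := hmin q hqL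
  omega

theorem dist_eq_succ_of_dist_lt (hN : G.IsNearPolygon d) (hx : x ∈ G.pts) (hL : L ∈ G.lines)
    (hu : u ∈ L) (hv : v ∈ L) (hw : w ∈ L) (hwu : w ≠ u) (hlt : G.dist x u < G.dist x v) :
    G.dist x w = G.dist x u + 1 := by
  obtain ⟨p, -, hp⟩ := hN.exists_nearest hx hL
  obtain rfl : u = p := by
    by_contra hup
    have := hp u hu hup
    rcases eq_or_ne v p with rfl | hvp
    · omega
    · have := hp v hv hvp
      omega
  exact hp w hw hwu

theorem dist_eq_two_of_dist_eq_one (hN : G.IsNearPolygon d) (hx : x ∈ G.pts)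
    (hL : L ∈ G.lines) (hu : u ∈ L) (hv : v ∈ L) (hw : w ∈ L) (hwu : w ≠ u)
    (hxu : G.dist x u = 1) (hxv : G.dist x v = 2) : G.dist x w = 2 := by
  have := hN.dist_eq_succ_of_dist_lt hx hL hu hv hw hwu (by omega)
  omega

theorem dist_succ_eq_of_dist_eq (hN : G.IsNearPolygon d) (hx : x ∈ G.pts)
    (hL : {u, v, w} ∈ G.lines) (huv : u ≠ v) (heq : G.dist x u = G.dist x v) :
    G.dist x w + 1 = G.dist x u := by
  obtain ⟨p, hpL, hp⟩ := hN.exists_nearest hx hL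
  have hup : u ≠ p := by
    rintro rfl
    have := hp v (by simp) huv.symm
    omega
  have hvp : v ≠ p := by
    rintro rfl
    have := hp u (by simp) huv
    omega
  obtain rfl : p = w := by simpa [hup.symm, hvp.symm] using hpL
  exact (hp u (by simp) hup).symm

theorem eq_of_dist_eq_one (hN : G.IsNearPolygon d) (hx : x ∈ G.pts)
    (hL : {u, v, w} ∈ G.lines) (huv : u ≠ v) (hxu : G.dist x u = 1) (hxv : G.dist x v = 1) :
    x = w := by
  have := hN.dist_succ_eq_of_dist_eq hx hL huv (hxu.trans hxv.symm)
  exact (hN.dist_eq_zero_iff hx (G.lines_pts _ hL (by simp))).mp (by omega)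

theorem dist_eq_two_of_mem_commonNeighbors (hN : G.IsNearPolygon d)
    (h3 : ∀ L ∈ G.lines, L.ncard = 3) {a b : P} (hyz : y ≠ z)
    (ha : a ∈ G.graph.commonNeighbors y z) (hb : b ∈ G.graph.commonNeighbors y z)
    (hab : a ≠ b) : G.dist a b = 2 := by
  obtain ⟨hya, hza⟩ := ha
  obtain ⟨hyb, hzb⟩ := hb
  have hle : G.dist a b ≤ 2 :=
    calc G.dist a b ≤ G.dist a y + G.dist y b :=
          hN.dist_le_add_dist (mem_pts_of_adj hya.symm) (mem_pts_of_adj hya) b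
      _ = 2 := by rw [dist_eq_one_iff_adj.mpr hya.symm, dist_eq_one_iff_adj.mpr hyb]
  have hpos : G.dist a b ≠ 0 := fun h =>
    hab ((hN.dist_eq_zero_iff (mem_pts_of_adj hya.symm) (mem_pts_of_adj hyb.symm)).mp h)
  have hne1 : G.dist a b ≠ 1 := by
    intro h
    obtain ⟨-, L, hL, haL, hbL⟩ := dist_eq_one_iff_adj.mp h
    obtain ⟨c, -, -, rfl⟩ := exists_third_point h3 hL haL hbL hab
    have hyc := hN.eq_of_dist_eq_one (mem_pts_of_adj hya) hL hab
      (dist_eq_one_iff_adj.mpr hya) (dist_eq_one_iff_adj.mpr hyb)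
    have hzc := hN.eq_of_dist_eq_one (mem_pts_of_adj hza) hL hab
      (dist_eq_one_iff_adj.mpr hza) (dist_eq_one_iff_adj.mpr hzb)
    exact hyz (hyc.trans hzc.symm)
  omega

theorem dist_eq_one_of_third_points (hN : G.IsNearPolygon d) {a b e f s k : P}
    (hya : {y, a, e} ∈ G.lines) (hzb : {z, b, f} ∈ G.lines) (hef : {e, f, s} ∈ G.lines)
    (hey : e ≠ y) (hfz : f ≠ z) (hne : e ≠ f) (hk : k ∈ G.pts)
    (hky : G.dist k y = 1) (hkz : G.dist k z = 1) (hka : G.dist k a = 2)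
    (hkb : G.dist k b = 2) : G.dist k s = 1 := by
  have hke := hN.dist_eq_two_of_dist_eq_one hk hya (by simp) (by simp) (by simp) hey hky hka
  have hkf := hN.dist_eq_two_of_dist_eq_one hk hzb (by simp) (by simp) (by simp) hfz hkz hkb
  have := hN.dist_succ_eq_of_dist_eq hk hef hne (hke.trans hkf.symm)
  omega

/-- The point `s` is the third point on the line joining the third points of `ya` and `zb`. -/
theorem exists_adj_commonNeighbors_of_dist_eq_two (hN : G.IsNearPolygon d)
    (h3 : ∀ L ∈ G.lines, L.ncard = 3) {a b : P} (hyz : G.dist y z = 2) (hab : G.dist a b = 2)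
    (hay : G.dist a y = 1) (haz : G.dist a z = 1) (hby : G.dist b y = 1)
    (hbz : G.dist b z = 1) :
    ∃ s ∈ G.pts, G.dist s y = 2 ∧ G.dist s z = 2 ∧
      (∀ k ∈ G.pts, G.dist k y = 1 → G.dist k z = 1 → G.dist k a = 2 → G.dist k b = 2 →
        G.dist k s = 1) ∧
      (∀ k ∈ G.pts, G.dist k a = 1 → G.dist k b = 1 → G.dist k y = 2 → G.dist k z = 2 →
        G.dist k s = 1) := by
  obtain ⟨hay', La, hLa, haLa, hyLa⟩ := dist_eq_one_iff_adj.mp hay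
  obtain ⟨e, hey, hea, rfl⟩ := exists_third_point h3 hLa hyLa haLa hay'.symm
  obtain ⟨hbz', Lb, hLb, hbLb, hzLb⟩ := dist_eq_one_iff_adj.mp hbz
  obtain ⟨f, hfz, hfb, rfl⟩ := exists_third_point h3 hLb hzLb hbLb hbz'.symm
  have hz : z ∈ G.pts := G.lines_pts _ hLb (a := z) (by simp)
  have hy : y ∈ G.pts := G.lines_pts _ hLa (a := y) (by simp)
  have hb : b ∈ G.pts := G.lines_pts _ hLb (a := b) (by simp)
  have he : e ∈ G.pts := G.lines_pts _ hLa (a := e) (by simp)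
  have hze := hN.dist_eq_two_of_dist_eq_one (v := y) hz hLa (by simp) (by simp) (by simp) hea
    (by rwa [dist_comm]) (by rwa [dist_comm])
  have hyf := hN.dist_eq_two_of_dist_eq_one hy hLb (by simp) (by simp) (by simp) hfb
    (by rwa [dist_comm]) hyz
  have hbe := hN.dist_eq_two_of_dist_eq_one (v := a) hb hLa (by simp) (by simp) (by simp) hey hby
    (by rwa [dist_comm])
  have hef : G.dist e f = 1 := by
    have := hN.dist_succ_eq_of_dist_eq he hLb hbz'.symm
      (by rw [dist_comm e z, dist_comm e b, hze, hbe])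
    rw [dist_comm e z, hze] at this
    omega
  obtain ⟨hef', Ls, hLs, heLs, hfLs⟩ := dist_eq_one_iff_adj.mp hef
  obtain ⟨s, hse, hsf, rfl⟩ := exists_third_point h3 hLs heLs hfLs hef'
  have hye : G.dist y e = 1 := dist_eq_one_iff_adj.mpr ⟨hey.symm, _, hLa, by simp, by simp⟩
  have hzf : G.dist z f = 1 := dist_eq_one_iff_adj.mpr ⟨hfz.symm, _, hLb, by simp, by simp⟩
  have hys := hN.dist_eq_two_of_dist_eq_one hy hLs (by simp) (by simp) (by simp) hse hye hyf
  have hzs := hN.dist_eq_two_of_dist_eq_one hz hLs (by simp) (by simp) (by simp) hsf hzf hze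
  refine ⟨s, G.lines_pts _ hLs (by simp), by rwa [dist_comm], by rwa [dist_comm],
    fun k hk => ?_, fun k hk => ?_⟩
  · exact hN.dist_eq_one_of_third_points hLa hLb hLs hey hfz hef' hk
  · rw [Set.insert_comm] at hLa hLb
    exact hN.dist_eq_one_of_third_points hLa hLb hLs hea hfb hef' hk

theorem finite_commonNeighbors_of_dist_eq_two (hN : G.IsNearPolygon d)
    (h3 : ∀ L ∈ G.lines, L.ncard = 3) (hyz : G.dist y z = 2) :
    (G.graph.commonNeighbors y z).Finite := by
  by_contra hinf
  let c := Set.Infinite.natEmbedding _ hinf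
  have hyz' : y ≠ z := by
    rintro rfl
    simp [Geom.dist] at hyz
  have hcy (i : ℕ) : G.dist (c i) y = 1 := dist_eq_one_iff_adj.mpr (c i).2.1.symm
  have hcz (i : ℕ) : G.dist (c i) z = 1 := dist_eq_one_iff_adj.mpr (c i).2.2.symm
  have hc (i : ℕ) : (c i : P) ∈ G.pts := mem_pts_of_adj (c i).2.1.symm
  have hcc {i j : ℕ} (hij : i ≠ j) : G.dist (c i) (c j) = 2 :=
    hN.dist_eq_two_of_mem_commonNeighbors h3 hyz' (c i).2 (c j).2
      fun h => hij (c.injective (Subtype.ext h))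
  obtain ⟨s, hs, hsy, hsz, hs₁, -⟩ := hN.exists_adj_commonNeighbors_of_dist_eq_two h3 hyz
    (hcc (i := 0) (j := 1) (by norm_num)) (hcy 0) (hcz 0) (hcy 1) (hcz 1)
  obtain ⟨s', -, -, -, hs'₁, hs'₂⟩ := hN.exists_adj_commonNeighbors_of_dist_eq_two h3 hyz
    (hcc (i := 2) (j := 3) (by norm_num)) (hcy 2) (hcz 2) (hcy 3) (hcz 3)
  have hsc (i : ℕ) (hi₀ : i ≠ 0) (hi₁ : i ≠ 1) : G.dist (c i) s = 1 :=
    hs₁ _ (hc i) (hcy i) (hcz i) (hcc hi₀) (hcc hi₁)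
  have hs'c (i : ℕ) (hi₂ : i ≠ 2) (hi₃ : i ≠ 3) : G.dist (c i) s' = 1 :=
    hs'₁ _ (hc i) (hcy i) (hcz i) (hcc hi₂) (hcc hi₃)
  have hss' : G.dist s s' = 1 := hs'₂ s hs
    (by rw [dist_comm]; exact hsc 2 (by norm_num) (by norm_num))
    (by rw [dist_comm]; exact hsc 3 (by norm_num) (by norm_num)) hsy hsz
  obtain ⟨hss'', L, hL, hsL, hs'L⟩ := dist_eq_one_iff_adj.mp hss'
  obtain ⟨g, -, -, rfl⟩ := exists_third_point h3 hL hsL hs'L hss''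
  have hc₄ := hN.eq_of_dist_eq_one (hc 4) hL hss''
    (hsc 4 (by norm_num) (by norm_num)) (hs'c 4 (by norm_num) (by norm_num))
  have hc₅ := hN.eq_of_dist_eq_one (hc 5) hL hss''
    (hsc 5 (by norm_num) (by norm_num)) (hs'c 5 (by norm_num) (by norm_num))
  exact absurd (c.injective (Subtype.ext (hc₄.trans hc₅.symm))) (by norm_num)

theorem finite_commonNeighbors (hN : G.IsNearPolygon d) (h3 : ∀ L ∈ G.lines, L.ncard = 3)
    (hy : y ∈ G.pts) (hz : z ∈ G.pts) (hyz : y ≠ z) :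
    (G.graph.commonNeighbors y z).Finite := by
  rcases (G.graph.commonNeighbors y z).eq_empty_or_nonempty with h | ⟨x, hxy, hxz⟩
  · exact h ▸ Set.finite_empty
  have hle : G.dist y z ≤ 2 :=
    calc G.dist y z ≤ G.dist y x + G.dist x z :=
          hN.dist_le_add_dist hy (mem_pts_of_adj hxy.symm) z
      _ = 2 := by rw [dist_eq_one_iff_adj.mpr hxy, dist_eq_one_iff_adj.mpr hxz.symm]
  have hpos : G.dist y z ≠ 0 := fun h => hyz ((hN.dist_eq_zero_iff hy hz).mp h)
  obtain h1 | h2 : G.dist y z = 1 ∨ G.dist y z = 2 := by omega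
  · obtain ⟨-, L, hL, hyL, hzL⟩ := dist_eq_one_iff_adj.mp h1
    obtain ⟨w, -, -, rfl⟩ := exists_third_point h3 hL hyL hzL hyz
    refine (Set.finite_singleton w).subset fun x ⟨hxy, hxz⟩ => ?_
    exact hN.eq_of_dist_eq_one (mem_pts_of_adj hxy.symm) hL hyz
      (dist_eq_one_iff_adj.mpr hxy.symm) (dist_eq_one_iff_adj.mpr hxz.symm)
  · exact hN.finite_commonNeighbors_of_dist_eq_two h3 h2

end IsNearPolygon

end Geom

theorem statement_10_general {P : Type*} (N H : Geom P)
    (hN : N.IsNearPolygon 3)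
    (h3 : ∀ L ∈ N.lines, L.ncard = 3)
    (hsub : H.IsSubgeom N)
    (hH : H.IsGenHexagon) (hord : H.HasOrder 2 2) :
    {x | x ∈ N.pts ∧ x ∉ H.pts ∧ ∃ y ∈ H.pts, ∃ z ∈ H.pts,
      y ≠ z ∧ N.graph.Adj x y ∧ N.graph.Adj x z}.Finite := by
  have hHfin : H.pts.Finite := hord.pts_finite hH.1
  refine (hHfin.biUnion fun y hy => (hHfin.sdiff (t := {y})).biUnion fun z hz =>
    hN.finite_commonNeighbors h3 (hsub.1 hy) (hsub.1 hz.1) (Ne.symm hz.2)).subset ?_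
  rintro x ⟨-, -, y, hy, z, hz, hyz, hxy, hxz⟩
  exact Set.mem_biUnion hy (Set.mem_biUnion ⟨hz, hyz.symm⟩ ⟨hxy.symm, hxz.symm⟩)

theorem statement_10 {P : Type*} (N H : Geom P)
    (hN : N.IsNearPolygon 3)
    (h3 : ∀ L ∈ N.lines, L.ncard = 3)
    (hsub : H.IsSubgeom N) (hiso : H.IsIsometric N)
    (hH : H.IsGenHexagon) (hord : H.HasOrder 2 2) :
    {x | x ∈ N.pts ∧ x ∉ H.pts ∧ ∃ y ∈ H.pts, ∃ z ∈ H.pts,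
      y ≠ z ∧ N.graph.Adj x y ∧ N.graph.Adj x z}.Finite :=
  statement_10_general N H hN h3 hsub hH hord
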